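/- For every k ≥ 5, the bicliques of the cycle C_k (with vertex set Z_k and i adjacent to i±1 mod k) are exactly the k sets of three consecutive vertices {i−1, i, i+1} for i ∈ Z_k. -/
import Mathlib

open SimpleGraph

variable {V : Type}

/-- `B1`, `B2` are the two (nonempty) parts of an induced complete bipartite subgraph:
they are disjoint, each part is independent, and all edges between the parts are present. -/
def IsCBP (H : SimpleGraph V) (B1 B2 : Set V) : Prop :=
  B1.Nonempty ∧ B2.Nonempty ∧ Disjoint B1 B2 ∧
    (∀ a ∈ B1, ∀ b ∈ B1, ¬H.Adj a b) ∧
    (∀ a ∈ B2, ∀ b ∈ B2, ¬H.Adj a b) ∧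
    (∀ a ∈ B1, ∀ b ∈ B2, H.Adj a b)

/-- A set of vertices inducing a complete bipartite subgraph `K_{m,n}`, `m, n ≥ 1`. -/
def IsCompleteBipartiteSet (H : SimpleGraph V) (S : Set V) : Prop :=
  ∃ B1 B2 : Set V, IsCBP H B1 B2 ∧ B1 ∪ B2 = S

/-- A biclique: a maximal set of vertices inducing a complete bipartite subgraph. -/
def IsBiclique (H : SimpleGraph V) (S : Set V) : Prop :=
  IsCompleteBipartiteSet H S ∧
    ∀ T : Set V, IsCompleteBipartiteSet H T → S ⊆ T → S = T

/-- The biclique graph `KB(H)`: the intersection graph of the bicliques of `H`. -/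
def KB (H : SimpleGraph V) : SimpleGraph {S : Set V // IsBiclique H S} :=
  SimpleGraph.fromRel fun A B => (A.1 ∩ B.1).Nonempty

/-- The cycle `C_k` on vertex set `ZMod k`, `i` adjacent to `j` iff `i - j ≡ ±1 (mod k)`. -/
def cycle (k : ℕ) : SimpleGraph (ZMod k) :=
  SimpleGraph.fromRel fun i j => i = j + 1

lemma cycle_adj {k : ℕ} {a b : ZMod k} :
    (cycle k).Adj a b ↔ a ≠ b ∧ (a = b + 1 ∨ b = a + 1) := by
  simp [cycle, SimpleGraph.fromRel_adj]

lemma nzmod {k : ℕ} (hk : 5 ≤ k) {m : ℕ} (h0 : 0 < m) (h : m < k) :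
    (m : ZMod k) ≠ 0 := by
  intro H
  rw [ZMod.natCast_eq_zero_iff] at H
  exact absurd (Nat.le_of_dvd h0 H) (by omega)

lemma adj_mem {k : ℕ} {c x : ZMod k} (h : (cycle k).Adj c x) :
    x = c - 1 ∨ x = c + 1 := by
  rw [cycle_adj] at h
  rcases h.2 with h' | h'
  · left; rw [h']; ring
  · right; exact h'

lemma IsCBP.symm' {H : SimpleGraph V} {B1 B2 : Set V} (h : IsCBP H B1 B2) :
    IsCBP H B2 B1 := by
  obtain ⟨n1, n2, d, i1, i2, a⟩ := h
  exact ⟨n2, n1, d.symm, i2, i1, fun x hx y hy => (a y hy x hx).symm⟩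

lemma triple_cbp {k : ℕ} (hk : 5 ≤ k) (c : ZMod k) :
    IsCompleteBipartiteSet (cycle k) {c - 1, c, c + 1} := by
  have h1 : (1 : ZMod k) ≠ 0 := by simpa using nzmod hk (by norm_num) (by omega : 1 < k)
  have h2 : (2 : ZMod k) ≠ 0 := by simpa using nzmod hk (by norm_num) (by omega : 2 < k)
  have h3 : (3 : ZMod k) ≠ 0 := by simpa using nzmod hk (by norm_num) (by omega : 3 < k)
  have h4 : (4 : ZMod k) ≠ 0 := by simpa using nzmod hk (by norm_num) (by omega : 4 < k)
  refine ⟨{c}, {c - 1, c + 1}, ⟨⟨c, rfl⟩, ⟨c - 1, by simp⟩, ?_, ?_, ?_, ?_⟩, ?_⟩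
  · rw [Set.disjoint_left]
    rintro x rfl hmem
    simp only [Set.mem_insert_iff, Set.mem_singleton_iff] at hmem
    rcases hmem with h | h
    · first | exact h1 (by linear_combination h) | exact h1 (by linear_combination -h) | exact h2 (by linear_combination h) | exact h2 (by linear_combination -h) | exact h3 (by linear_combination h) | exact h3 (by linear_combination -h) | exact h4 (by linear_combination h) | exact h4 (by linear_combination -h)
    · first | exact h1 (by linear_combination h) | exact h1 (by linear_combination -h) | exact h2 (by linear_combination h) | exact h2 (by linear_combination -h) | exact h3 (by linear_combination h) | exact h3 (by linear_combination -h) | exact h4 (by linear_combination h) | exact h4 (by linear_combination -h)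
  · rintro a ha b hb hadj
    simp only [Set.mem_singleton_iff] at ha hb
    subst ha; subst hb
    exact hadj.ne rfl
  · rintro a ha b hb hadj
    rw [cycle_adj] at hadj
    simp only [Set.mem_insert_iff, Set.mem_singleton_iff] at ha hb
    obtain ⟨hne, hor⟩ := hadj
    rcases ha with rfl | rfl <;> rcases hb with rfl | rfl
    · exact hne rfl
    · rcases hor with h | h
      · first | exact h1 (by linear_combination h) | exact h1 (by linear_combination -h) | exact h2 (by linear_combination h) | exact h2 (by linear_combination -h) | exact h3 (by linear_combination h) | exact h3 (by linear_combination -h) | exact h4 (by linear_combination h) | exact h4 (by linear_combination -h)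
      · first | exact h1 (by linear_combination h) | exact h1 (by linear_combination -h) | exact h2 (by linear_combination h) | exact h2 (by linear_combination -h) | exact h3 (by linear_combination h) | exact h3 (by linear_combination -h) | exact h4 (by linear_combination h) | exact h4 (by linear_combination -h)
    · rcases hor with h | h
      · first | exact h1 (by linear_combination h) | exact h1 (by linear_combination -h) | exact h2 (by linear_combination h) | exact h2 (by linear_combination -h) | exact h3 (by linear_combination h) | exact h3 (by linear_combination -h) | exact h4 (by linear_combination h) | exact h4 (by linear_combination -h)
      · first | exact h1 (by linear_combination h) | exact h1 (by linear_combination -h) | exact h2 (by linear_combination h) | exact h2 (by linear_combination -h) | exact h3 (by linear_combination h) | exact h3 (by linear_combination -h) | exact h4 (by linear_combination h) | exact h4 (by linear_combination -h)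
    · exact hne rfl
  · rintro a ha b hb
    simp only [Set.mem_singleton_iff, Set.mem_insert_iff] at ha hb
    subst ha
    rw [cycle_adj]
    rcases hb with rfl | rfl
    · refine ⟨fun h => ?_, Or.inl (by ring)⟩
      first | exact h1 (by linear_combination h) | exact h1 (by linear_combination -h) | exact h2 (by linear_combination h) | exact h2 (by linear_combination -h) | exact h3 (by linear_combination h) | exact h3 (by linear_combination -h) | exact h4 (by linear_combination h) | exact h4 (by linear_combination -h)
    · refine ⟨fun h => ?_, Or.inr rfl⟩
      first | exact h1 (by linear_combination h) | exact h1 (by linear_combination -h) | exact h2 (by linear_combination h) | exact h2 (by linear_combination -h) | exact h3 (by linear_combination h) | exact h3 (by linear_combination -h) | exact h4 (by linear_combination h) | exact h4 (by linear_combination -h)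
  · ext x
    simp only [Set.mem_union, Set.mem_insert_iff, Set.mem_singleton_iff]
    tauto

lemma part_bound {k : ℕ} (hk : 5 ≤ k) {C1 C2 : Set (ZMod k)}
    (hcbp : IsCBP (cycle k) C1 C2) {i : ZMod k} (hi : i ∈ C1)
    (hm1 : i - 1 ∈ C1 ∪ C2) (hp1 : i + 1 ∈ C1 ∪ C2) :
    C1 ∪ C2 ⊆ {i - 1, i, i + 1} := by
  have h1 : (1 : ZMod k) ≠ 0 := by simpa using nzmod hk (by norm_num) (by omega : 1 < k)
  have h2 : (2 : ZMod k) ≠ 0 := by simpa using nzmod hk (by norm_num) (by omega : 2 < k)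
  have h3 : (3 : ZMod k) ≠ 0 := by simpa using nzmod hk (by norm_num) (by omega : 3 < k)
  have h4 : (4 : ZMod k) ≠ 0 := by simpa using nzmod hk (by norm_num) (by omega : 4 < k)
  obtain ⟨-, -, hdisj, hI1, hI2, hAdj⟩ := hcbp
  have adjm : (cycle k).Adj i (i - 1) := by
    rw [cycle_adj]
    refine ⟨fun h => ?_, Or.inl (by ring)⟩
    first | exact h1 (by linear_combination h) | exact h1 (by linear_combination -h) | exact h2 (by linear_combination h) | exact h2 (by linear_combination -h) | exact h3 (by linear_combination h) | exact h3 (by linear_combination -h) | exact h4 (by linear_combination h) | exact h4 (by linear_combination -h)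
  have adjp : (cycle k).Adj i (i + 1) := by
    rw [cycle_adj]
    refine ⟨fun h => ?_, Or.inr rfl⟩
    first | exact h1 (by linear_combination h) | exact h1 (by linear_combination -h) | exact h2 (by linear_combination h) | exact h2 (by linear_combination -h) | exact h3 (by linear_combination h) | exact h3 (by linear_combination -h) | exact h4 (by linear_combination h) | exact h4 (by linear_combination -h)
  have hm2 : i - 1 ∈ C2 := by
    rcases hm1 with hc | hc
    · exact absurd adjm (hI1 i hi _ hc)
    · exact hc
  have hp2 : i + 1 ∈ C2 := by
    rcases hp1 with hc | hc
    · exact absurd adjp (hI1 i hi _ hc)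
    · exact hc
  intro x hx
  simp only [Set.mem_insert_iff, Set.mem_singleton_iff]
  rcases hx with hx | hx
  · have b1 : x = i - 1 - 1 ∨ x = i - 1 + 1 := adj_mem ((hAdj x hx _ hm2).symm)
    have b2 : x = i + 1 - 1 ∨ x = i + 1 + 1 := adj_mem ((hAdj x hx _ hp2).symm)
    rcases b1 with hA | hA <;> rcases b2 with hB | hB
    · exfalso; have h := hA.symm.trans hB
      first | exact h1 (by linear_combination h) | exact h1 (by linear_combination -h) | exact h2 (by linear_combination h) | exact h2 (by linear_combination -h) | exact h3 (by linear_combination h) | exact h3 (by linear_combination -h) | exact h4 (by linear_combination h) | exact h4 (by linear_combination -h)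
    · exfalso; have h := hA.symm.trans hB
      first | exact h1 (by linear_combination h) | exact h1 (by linear_combination -h) | exact h2 (by linear_combination h) | exact h2 (by linear_combination -h) | exact h3 (by linear_combination h) | exact h3 (by linear_combination -h) | exact h4 (by linear_combination h) | exact h4 (by linear_combination -h)
    · right; left; rw [hA]; ring
    · exfalso; have h := hA.symm.trans hB
      first | exact h1 (by linear_combination h) | exact h1 (by linear_combination -h) | exact h2 (by linear_combination h) | exact h2 (by linear_combination -h) | exact h3 (by linear_combination h) | exact h3 (by linear_combination -h) | exact h4 (by linear_combination h) | exact h4 (by linear_combination -h)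
  · rcases adj_mem (hAdj i hi x hx) with rfl | rfl
    · left; rfl
    · right; right; rfl

/-- For `k ≥ 5`, the bicliques of `C_k` are exactly the sets of 3 consecutive vertices. -/
theorem stmt_11 (k : ℕ) (hk : 5 ≤ k) (S : Set (ZMod k)) :
    IsBiclique (cycle k) S ↔ ∃ i : ZMod k, S = {i - 1, i, i + 1} := by
  have h1 : (1 : ZMod k) ≠ 0 := by simpa using nzmod hk (by norm_num) (by omega : 1 < k)
  have h2 : (2 : ZMod k) ≠ 0 := by simpa using nzmod hk (by norm_num) (by omega : 2 < k)
  have h3 : (3 : ZMod k) ≠ 0 := by simpa using nzmod hk (by norm_num) (by omega : 3 < k)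
  have h4 : (4 : ZMod k) ≠ 0 := by simpa using nzmod hk (by norm_num) (by omega : 4 < k)
  constructor
  · rintro ⟨⟨B1, B2, hcbp, hU⟩, hmax⟩
    obtain ⟨⟨a, ha⟩, ⟨b, hb⟩, hdisj, hI1, hI2, hAdj⟩ := hcbp
    have key : ∃ c : ZMod k, S ⊆ {c - 1, c, c + 1} := by
      by_cases hB1 : ∀ a' ∈ B1, a' = a
      · refine ⟨a, ?_⟩
        intro x hx
        rw [← hU] at hx
        simp only [Set.mem_insert_iff, Set.mem_singleton_iff]
        rcases hx with hx | hx
        · right; left; exact hB1 x hx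
        · rcases adj_mem (hAdj a ha x hx) with rfl | rfl
          · left; rfl
          · right; right; rfl
      · push_neg at hB1
        obtain ⟨a', ha', hnea⟩ := hB1
        refine ⟨b, ?_⟩
        have hB2 : ∀ x ∈ B2, x = b := by
          intro x hx
          have pa : a = x - 1 ∨ a = x + 1 := adj_mem ((hAdj a ha x hx).symm)
          have pa' : a' = x - 1 ∨ a' = x + 1 := adj_mem ((hAdj a' ha' x hx).symm)
          have qa : a = b - 1 ∨ a = b + 1 := adj_mem ((hAdj a ha b hb).symm)
          have qa' : a' = b - 1 ∨ a' = b + 1 := adj_mem ((hAdj a' ha' b hb).symm)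
          rcases pa with hp | hp <;> rcases pa' with hp' | hp'
          · exact absurd (hp'.trans hp.symm) hnea
          · rcases qa with hq | hq <;> rcases qa' with hq' | hq'
            all_goals
              have hA := hp.symm.trans hq
              have hB := hp'.symm.trans hq'
              first | linear_combination hA | linear_combination hB | exact absurd (show (2:ZMod k) = 0 by first | linear_combination hA - hB | linear_combination hB - hA) h2 | exact absurd (show (4:ZMod k) = 0 by first | linear_combination hA - hB | linear_combination hB - hA) h4
          · rcases qa with hq | hq <;> rcases qa' with hq' | hq'
            all_goals
              have hA := hp.symm.trans hq
              have hB := hp'.symm.trans hq'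
              first | linear_combination hA | linear_combination hB | exact absurd (show (2:ZMod k) = 0 by first | linear_combination hA - hB | linear_combination hB - hA) h2 | exact absurd (show (4:ZMod k) = 0 by first | linear_combination hA - hB | linear_combination hB - hA) h4
          · exact absurd (hp'.trans hp.symm) hnea
        intro x hx
        rw [← hU] at hx
        simp only [Set.mem_insert_iff, Set.mem_singleton_iff]
        rcases hx with hx | hx
        · rcases adj_mem ((hAdj x hx b hb).symm) with rfl | rfl
          · left; rfl
          · right; right; rfl
        · right; left; exact hB2 x hx
    obtain ⟨c, hc⟩ := key
    exact ⟨c, hmax _ (triple_cbp hk c) hc⟩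
  · rintro ⟨i, rfl⟩
    refine ⟨triple_cbp hk i, ?_⟩
    rintro T ⟨C1, C2, hcbp, hU⟩ hsub
    have hiT : i ∈ C1 ∪ C2 := by rw [hU]; exact hsub (by simp)
    have hm : i - 1 ∈ C1 ∪ C2 := by rw [hU]; exact hsub (by simp)
    have hp : i + 1 ∈ C1 ∪ C2 := by rw [hU]; exact hsub (by simp)
    refine Set.Subset.antisymm hsub ?_
    rw [← hU]
    rcases hiT with hi | hi
    · exact part_bound hk hcbp hi hm hp
    · have := part_bound hk hcbp.symm' hi (by rw [Set.union_comm]; exact hm)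
        (by rw [Set.union_comm]; exact hp)
      rw [Set.union_comm]; exact this
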